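/- Let Z_t be a strictly stationary ergodic process with continuous strictly increasing marginal CDF G, and let F be a continuous strictly increasing CDF. If Y_t = F⁻¹(G(Z_t)) and the margin adjustment estimator is defined as F̃_T(x) = max_{1≤t≤T}{G(Z_t) : Y_t ≤ x}, then F̃_T(x) = max_{1≤t≤T}{U_t : U_t ≤ F(x)} where U_t = G(Z_t), and F̃_T(x) → F(x) almost surely for every x ∈ ℝ as T → ∞ (assuming F assigns positive mass to every left-neighborhood of x under the induced law). -/

import Mathlib

open MeasureTheory ProbabilityTheory Filter Set Topology

/-! Since `Finv` inverts `F` on `(0, 1)` and `F` is increasing, `Y t ≤ x` iff `U t ≤ F x`.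
For consistency: `G` is the continuous cdf of `f`, so every window `(F x - ε, F x]` has positive
probability under the law of `U t`, and by ergodicity almost every orbit enters it. Once it has,
the running maximum of the `U t` below `F x` stays in the window. -/

theorem StrictMono.lt_of_tendsto_atTop {α β : Type*} [PartialOrder α] [IsDirectedOrder α]
    [NoMaxOrder α] [TopologicalSpace β] [Preorder β] [OrderClosedTopology β] {f : α → β} {b : β}
    (hf : StrictMono f) (h : Tendsto f atTop (𝓝 b)) (a : α) : f a < b := by
  obtain ⟨a', ha'⟩ := exists_gt a
  exact (hf ha').trans_le (hf.monotone.ge_of_tendsto h a')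

theorem StrictMono.lt_of_tendsto_atBot {α β : Type*} [PartialOrder α] [IsCodirectedOrder α]
    [NoMinOrder α] [TopologicalSpace β] [Preorder β] [OrderClosedTopology β] {f : α → β} {b : β}
    (hf : StrictMono f) (h : Tendsto f atBot (𝓝 b)) (a : α) : b < f a := by
  obtain ⟨a', ha'⟩ := exists_lt a
  exact (hf.monotone.le_of_tendsto h a').trans_lt (hf ha')

theorem Ergodic.ae_exists_iterate_mem {Ω : Type*} [MeasurableSpace Ω] {μ : Measure Ω}
    [IsFiniteMeasure μ] {S : Ω → Ω} (hS : Ergodic S μ) {A : Set Ω} (hA : MeasurableSet A)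
    (hA0 : μ A ≠ 0) : ∀ᵐ ω ∂μ, ∃ n, S^[n] ω ∈ A := by
  set B := ⋃ n, S^[n] ⁻¹' A
  have hBm : MeasurableSet B := .iUnion fun n => hS.measurable.iterate n hA
  have hSB : S ⁻¹' B ⊆ B := by
    simp only [B, preimage_iUnion, ← preimage_comp, ← Function.iterate_succ]
    exact iUnion_subset fun n => subset_iUnion (fun n => S^[n] ⁻¹' A) (n + 1)
  rcases hS.ae_empty_or_univ_of_preimage_ae_le hBm.nullMeasurableSet hSB.eventuallyLE
    with hB | hB
  · refine absurd (measure_mono_null (subset_iUnion (fun n => S^[n] ⁻¹' A) 0) ?_) hA0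
    rw [measure_congr hB, measure_empty]
  · filter_upwards [eventuallyEq_univ.1 hB] with ω hω
    exact mem_iUnion.1 hω

namespace ProbabilityTheory

theorem Ioo_subset_range_cdf (ν : Measure ℝ) (hν : Continuous (cdf ν)) :
    Ioo 0 1 ⊆ range (cdf ν) := fun _ hc =>
  mem_range_of_exists_le_of_exists_ge hν
    ((tendsto_cdf_atBot ν).eventually (ge_mem_nhds hc.1)).exists
    ((tendsto_cdf_atTop ν).eventually (le_mem_nhds hc.2)).exists

theorem measure_cdf_preimage_Ioc_ne_zero (ν : Measure ℝ) [IsProbabilityMeasure ν]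
    (hν : Continuous (cdf ν)) {a c : ℝ} (hac : a < c) (hc : c ∈ Ioo 0 1) :
    ν (cdf ν ⁻¹' Ioc a c) ≠ 0 := by
  -- a level `v ∈ (max a 0, c)` is attained too, and `ν (Ioc z₁ z₀) = c - v` for the preimages.
  obtain ⟨v, hv⟩ := exists_between (max_lt hac hc.1)
  obtain ⟨z₀, hz₀⟩ := Ioo_subset_range_cdf ν hν hc
  obtain ⟨z₁, hz₁⟩ := Ioo_subset_range_cdf ν hν
    ⟨(le_max_right a 0).trans_lt hv.1, hv.2.trans hc.2⟩
  have hsub : Ioc z₁ z₀ ⊆ cdf ν ⁻¹' Ioc a c := fun z hz =>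
    ⟨(le_max_left a 0).trans_lt (hv.1.trans_le (hz₁ ▸ monotone_cdf ν hz.1.le)),
      hz₀ ▸ monotone_cdf ν hz.2⟩
  refine (pos_of_ne_zero ?_ |>.trans_le (measure_mono hsub)).ne'
  rw [← measure_cdf ν, StieltjesFunction.measure_Ioc, hz₀, hz₁, ENNReal.ofReal_ne_zero_iff]
  linarith [hv.2]

end ProbabilityTheory

theorem tendsto_sSup_initial_values_le_of_forall_exists_mem_Ioc {u : ℕ → ℝ} {c : ℝ}
    (h : ∀ ε > 0, ∃ n, u n ∈ Ioc (c - ε) c) :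
    Tendsto (fun T => sSup {v | ∃ t < T, u t = v ∧ v ≤ c}) atTop (𝓝 c) := by
  rw [Metric.tendsto_atTop]
  intro ε hε
  obtain ⟨n, hn⟩ := h ε hε
  refine ⟨n + 1, fun T hT => ?_⟩
  have hmem : u n ∈ {v | ∃ t < T, u t = v ∧ v ≤ c} := ⟨n, by omega, rfl, hn.2⟩
  have hle : sSup {v | ∃ t < T, u t = v ∧ v ≤ c} ≤ c :=
    csSup_le ⟨_, hmem⟩ fun v ⟨_, _, _, hv⟩ => hv
  have hge : u n ≤ sSup {v | ∃ t < T, u t = v ∧ v ≤ c} :=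
    le_csSup ⟨c, fun v ⟨_, _, _, hv⟩ => hv⟩ hmem
  rw [Real.dist_eq, abs_lt]
  constructor <;> linarith [hn.1]

theorem stmt6_general
    {Ω : Type*} [MeasurableSpace Ω] (μ : Measure Ω) [IsProbabilityMeasure μ]
    (S : Ω → Ω) (hS : Ergodic S μ)
    (f : Ω → ℝ) (hf : Measurable f)
    (Z : ℕ → Ω → ℝ) (hZ : ∀ t ω, Z t ω = f (S^[t] ω))
    (G : ℝ → ℝ) (hG : ∀ x, G x = (μ {ω | f ω ≤ x}).toReal)
    (hGc : Continuous G) (hGr : ∀ z, G z ∈ Set.Ioo (0:ℝ) 1)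
    (F : ℝ → ℝ) (hFm : StrictMono F)
    (hF0 : Tendsto F atBot (nhds 0)) (hF1 : Tendsto F atTop (nhds 1))
    (Finv : ℝ → ℝ)
    (hFinv2 : ∀ u ∈ Set.Ioo (0:ℝ) 1, F (Finv u) = u)
    (Y : ℕ → Ω → ℝ) (hY : ∀ t ω, Y t ω = Finv (G (Z t ω)))
    (x : ℝ) :
    (∀ (T : ℕ) (ω : Ω),
      sSup {u : ℝ | ∃ t < T, G (Z t ω) = u ∧ Y t ω ≤ x}
        = sSup {u : ℝ | ∃ t < T, G (Z t ω) = u ∧ u ≤ F x}) ∧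
    ∀ᵐ ω ∂μ, Tendsto
      (fun T : ℕ => sSup {u : ℝ | ∃ t < T, G (Z t ω) = u ∧ Y t ω ≤ x})
      atTop (nhds (F x)) := by
  have hiff (t : ℕ) (ω : Ω) : Y t ω ≤ x ↔ G (Z t ω) ≤ F x := by
    rw [hY, ← hFm.le_iff_le, hFinv2 _ (hGr _)]
  have hset (T : ℕ) (ω : Ω) : {u | ∃ t < T, G (Z t ω) = u ∧ Y t ω ≤ x}
      = {u | ∃ t < T, G (Z t ω) = u ∧ u ≤ F x} := by
    ext u
    constructor <;> rintro ⟨t, ht, rfl, h⟩ <;> exact ⟨t, ht, rfl, by simpa only [hiff] using h⟩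
  refine ⟨fun T ω => by rw [hset], ?_⟩
  have : IsProbabilityMeasure (μ.map f) := Measure.isProbabilityMeasure_map hf.aemeasurable
  have hG_cdf : G = cdf (μ.map f) := funext fun z => by
    rw [hG, cdf_eq_real, measureReal_def, Measure.map_apply hf measurableSet_Iic]
    rfl
  subst hG_cdf
  have hFx : F x ∈ Ioo 0 1 := ⟨hFm.lt_of_tendsto_atBot hF0 x, hFm.lt_of_tendsto_atTop hF1 x⟩
  have hvisit (k : ℕ) : ∀ᵐ ω ∂μ, ∃ n, cdf (μ.map f) (Z n ω) ∈ Ioc (F x - 1 / (k + 1)) (F x) := by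
    have hA := measure_cdf_preimage_Ioc_ne_zero (μ.map f) hGc
      (sub_lt_self (F x) (Nat.one_div_pos_of_nat (n := k))) hFx
    rw [Measure.map_apply hf (hGc.measurable measurableSet_Ioc), ← preimage_comp] at hA
    simpa only [hZ, mem_preimage, Function.comp_apply] using
      hS.ae_exists_iterate_mem (hGc.measurable.comp hf measurableSet_Ioc) hA
  filter_upwards [ae_all_iff.2 hvisit] with ω hω
  simp only [hset]
  refine tendsto_sSup_initial_values_le_of_forall_exists_mem_Ioc fun ε hε => ?_
  obtain ⟨k, hk⟩ := exists_nat_one_div_lt hε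
  obtain ⟨n, hn⟩ := hω k
  exact ⟨n, Ioc_subset_Ioc_left (by linarith) hn⟩

/-- margin adjustment consistency, Theorem 1 of the paper:
for a strictly stationary ergodic process `Z t = f ∘ S^[t]` with continuous
strictly increasing marginal CDF `G`, a continuous strictly increasing CDF `F`
with inverse `Finv`, and `Y t = Finv (G (Z t))`, the margin adjustment
`F̃_T(x) = max {G (Z t) : Y t ≤ x, t < T}` equals
`max {U t : U t ≤ F x, t < T}` where `U t = G (Z t)`, and converges a.s. to
`F x` for every `x`. -/
theorem stmt6
    {Ω : Type*} [MeasurableSpace Ω] (μ : Measure Ω) [IsProbabilityMeasure μ]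
    (S : Ω → Ω) (hS : Ergodic S μ)
    (f : Ω → ℝ) (hf : Measurable f)
    (Z : ℕ → Ω → ℝ) (hZ : ∀ t ω, Z t ω = f (S^[t] ω))
    (G : ℝ → ℝ) (hG : ∀ x, G x = (μ {ω | f ω ≤ x}).toReal)
    (hGc : Continuous G) (hGm : StrictMono G) (hGr : ∀ z, G z ∈ Set.Ioo (0:ℝ) 1)
    (F : ℝ → ℝ) (hFc : Continuous F) (hFm : StrictMono F)
    (hF0 : Tendsto F atBot (nhds 0)) (hF1 : Tendsto F atTop (nhds 1))
    (Finv : ℝ → ℝ) (hFinv1 : ∀ y, Finv (F y) = y)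
    (hFinv2 : ∀ u ∈ Set.Ioo (0:ℝ) 1, F (Finv u) = u)
    (Y : ℕ → Ω → ℝ) (hY : ∀ t ω, Y t ω = Finv (G (Z t ω)))
    (x : ℝ) :
    (∀ (T : ℕ) (ω : Ω),
      sSup {u : ℝ | ∃ t < T, G (Z t ω) = u ∧ Y t ω ≤ x}
        = sSup {u : ℝ | ∃ t < T, G (Z t ω) = u ∧ u ≤ F x}) ∧
    ∀ᵐ ω ∂μ, Tendsto
      (fun T : ℕ => sSup {u : ℝ | ∃ t < T, G (Z t ω) = u ∧ Y t ω ≤ x})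
      atTop (nhds (F x)) :=
  stmt6_general μ S hS f hf Z hZ G hG hGc hGr F hFm hF0 hF1 Finv hFinv2 Y hY x
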